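/- arXiv:1012.4737 — 4 statements merged into one kernel-verified Lean document; each statement's English description precedes it below -/
import Mathlib

section
/- Let β ≤ α be nonzero ordinals, X a nonempty set, and τ a nonempty family of subsets of X. Then (X, τ) is [β, α]-compact if and only if (X, τ) is [γ, γ]-compact for every ordinal γ with β ≤ γ ≤ α. -/
open Ordinal Set Cardinal

/-- The order type of a set of ordinals, under the induced order: the unique ordinal `o`
such that `S` with the induced order is order-isomorphic to `Set.Iio o`. -/
noncomputable def otype (S : Set Ordinal) : Ordinal :=
  sInf {o : Ordinal | Nonempty (S ≃o Set.Iio o)}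

/-- `(X, τ)` is `[β, α]`-compact: every `α`-indexed cover of `X` by members of `τ`
has a subcover indexed by a subset of `α` of order type `< β`. -/
def OrdCompact (β α : Ordinal) (X : Type*) (τ : Set (Set X)) : Prop :=
  ∀ O : Ordinal → Set X,
    (∀ δ < α, O δ ∈ τ) →
    (⋃ δ ∈ Set.Iio α, O δ) = Set.univ →
    ∃ H ⊆ Set.Iio α, otype H < β ∧ (⋃ δ ∈ H, O δ) = Set.univ

/-!
If `β ≤ γ ≤ α`, a `γ`-indexed cover becomes an `α`-indexed one by repeating its first member at
the indices `≥ γ`; pulling a small subcover back replaces those indices by the single index `0`,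
which does not raise the order type, since the subcover had an index `≥ γ` above all the others.

Conversely, induct on `α`. For `α ≥ β`, `[α, α]`-compactness shrinks an `α`-indexed cover to one
indexed by some `H` with `otype H < α`; reindexed along `H ≃o Iio (otype H)` this is an
`otype H`-indexed cover, and the induction hypothesis at `otype H` finishes.
-/

universe u v

theorem le_of_orderEmbedding_Iio {o o' : Ordinal.{u}} (f : Iio o ↪o Iio o') : o ≤ o' := by
  have := f.ltEmbedding.ordinal_type_le
  rwa [type_lt_Iio, type_lt_Iio, Ordinal.lift_le] at this

theorem otype_eq_of_orderIso {S : Set Ordinal.{u}} {o : Ordinal.{u}} (e : S ≃o Iio o) :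
    otype S = o := by
  refine le_antisymm (csInf_le' ⟨e⟩) (le_csInf ⟨o, ⟨e⟩⟩ ?_)
  rintro o' ⟨e'⟩
  exact le_of_orderEmbedding_Iio (e.symm.trans e').toOrderEmbedding

-- For unbounded `S` no `o` qualifies, and `otype S = sInf ∅ = 0` is junk.
theorem BddAbove.nonempty_orderIso_otype {S : Set Ordinal.{u}} (hS : BddAbove S) :
    Nonempty (S ≃o Iio (otype.{u, u} S)) := by
  obtain ⟨a, ha⟩ := hS
  have hS : S ⊆ Iio (a + 1) := fun x hx => Order.lt_add_one_iff.2 (ha hx)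
  have hle : typeLT S ≤ Ordinal.lift.{u + 1} (a + 1) := by
    rw [← type_lt_Iio]
    exact (OrderEmbedding.ofStrictMono (inclusion hS) fun _ _ h => h).ltEmbedding.ordinal_type_le
  obtain ⟨t, ht⟩ := Ordinal.mem_range_lift_of_le hle
  obtain ⟨e⟩ := type_eq.1 (ht.symm.trans (type_lt_Iio t).symm)
  rw [otype_eq_of_orderIso (OrderIso.ofRelIsoLT e)]
  exact ⟨OrderIso.ofRelIsoLT e⟩

theorem otype_Iio (o : Ordinal.{u}) : otype (Iio o) = o :=
  otype_eq_of_orderIso (OrderIso.refl _)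

section otype

variable {S T : Set Ordinal.{u}}

theorem otype_le_of_orderEmbedding (hS : BddAbove S) {o : Ordinal.{u}} (f : S ↪o Iio o) :
    otype S ≤ o := by
  obtain ⟨e⟩ := hS.nonempty_orderIso_otype
  exact le_of_orderEmbedding_Iio (e.symm.toOrderEmbedding.trans f)

theorem otype_congr (hS : BddAbove S) (e : S ≃o T) : otype.{u, u} T = otype S := by
  obtain ⟨e'⟩ := hS.nonempty_orderIso_otype
  exact otype_eq_of_orderIso (e.symm.trans e')

theorem otype_image_of_strictMonoOn (hS : BddAbove S) {g : Ordinal.{u} → Ordinal.{u}}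
    (hg : StrictMonoOn g S) : otype.{u, u} (g '' S) = otype S :=
  otype_congr hS (hg.orderIso g S)

theorem otype_mono (hT : BddAbove T) (h : S ⊆ T) : otype.{u, u} S ≤ otype T := by
  obtain ⟨e⟩ := hT.nonempty_orderIso_otype
  exact otype_le_of_orderEmbedding (hT.mono h)
    ((OrderEmbedding.ofStrictMono (inclusion h) fun _ _ h => h).trans e.toOrderEmbedding)

theorem otype_lt_of_forall_lt_mem (hT : BddAbove T) (h : S ⊆ T) {c : Ordinal.{u}} (hc : c ∈ T)
    (hSc : ∀ x ∈ S, x < c) : otype.{u, u} S < otype T := by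
  obtain ⟨e⟩ := hT.nonempty_orderIso_otype
  refine (otype_le_of_orderEmbedding (hT.mono h) (o := e ⟨c, hc⟩)
    (OrderEmbedding.ofStrictMono (fun x => ⟨e ⟨x, h x.2⟩, e.strictMono (hSc x x.2)⟩)
      fun x y hxy => e.strictMono hxy)).trans_lt (e ⟨c, hc⟩).2

theorem otype_insert_zero_le (hS : BddAbove S) : otype.{u, u} (insert 0 S) ≤ otype S + 1 := by
  obtain ⟨e⟩ := hS.nonempty_orderIso_otype
  have succ_lt_succ {a b : Ordinal.{u}} (h : a < b) : a + 1 < b + 1 :=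
    Order.lt_add_one_iff.2 (Order.add_one_le_of_lt h)
  let f (x : ↥(insert 0 S)) : Iio (otype.{u, u} S + 1) :=
    if hx : x.1 = 0 then ⟨0, Order.lt_add_one_iff.2 (zero_le (a := otype S))⟩
    else ⟨e ⟨x, x.2.resolve_left hx⟩ + 1, succ_lt_succ (e _).2⟩
  refine otype_le_of_orderEmbedding (hS.insert 0) (OrderEmbedding.ofStrictMono f ?_)
  rintro ⟨x, hx⟩ ⟨y, hy⟩ (hxy : x < y)
  have hy0 : y ≠ 0 := (zero_le.trans_lt hxy).ne'
  by_cases hx0 : x = 0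
  · simp only [f, hx0, hy0, dite_true, dite_false, ← Subtype.coe_lt_coe]
    exact Order.lt_add_one_iff.2 zero_le
  · simp only [f, hx0, hy0, dite_false, ← Subtype.coe_lt_coe]
    exact succ_lt_succ (e.strictMono hxy)

end otype

section OrdCompact

variable {X : Type v} {τ : Set (Set X)}

theorem ordCompact_of_lt {β α : Ordinal.{u}} (h : α < β) : OrdCompact β α X τ :=
  fun _ _ hcov => ⟨Iio α, subset_rfl, (otype_Iio α).trans_lt h, hcov⟩

theorem OrdCompact.mono_left {β β' α : Ordinal.{u}} (h : OrdCompact β α X τ) (hβ : β ≤ β') :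
    OrdCompact β' α X τ := fun O hO hcov =>
  let ⟨H, hHα, hHβ, hHcov⟩ := h O hO hcov
  ⟨H, hHα, hHβ.trans_le hβ, hHcov⟩

theorem OrdCompact.of_le {β α γ : Ordinal.{u}} (h : OrdCompact β α X τ) (hγ : γ ≠ 0)
    (hγα : γ ≤ α) : OrdCompact β γ X τ := by
  intro O hO hcov
  let g (δ : Ordinal.{u}) : Ordinal.{u} := if δ < γ then δ else 0
  have hg (δ : Ordinal.{u}) : g δ < γ := by
    unfold g; split_ifs with hδ
    exacts [hδ, pos_iff_ne_zero.2 hγ]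
  have hgcov : ⋃ δ ∈ Iio α, O (g δ) = Set.univ := by
    refine eq_univ_of_univ_subset (hcov ▸ iUnion₂_subset fun δ (hδ : δ < γ) => ?_)
    have hgδ : O (g δ) = O δ := by simp only [g, if_pos hδ]
    exact hgδ ▸ subset_biUnion_of_mem (u := fun δ => O (g δ)) (hδ.trans_le hγα)
  obtain ⟨H, hHα, hHβ, hHcov⟩ := h (fun δ => O (g δ)) (fun δ _ => hO _ (hg δ)) hgcov
  refine ⟨g '' H, image_subset_iff.2 fun δ _ => hg δ, ?_, by rwa [biUnion_image]⟩
  have hH : BddAbove H := bddAbove_Iio.mono hHα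
  refine lt_of_le_of_lt ?_ hHβ
  by_cases hHγ : H ⊆ Iio γ
  · have hgH_eq : g '' H = H := EqOn.image_eq_self fun δ hδ => if_pos (hHγ hδ)
    rw [hgH_eq]
  obtain ⟨c, hcH, hcγ⟩ := not_subset.1 hHγ
  have hgH : g '' H ⊆ insert 0 (H ∩ Iio γ) := by
    rintro _ ⟨δ, hδ, rfl⟩
    by_cases hδγ : δ < γ
    · exact Or.inr ⟨by simpa only [g, if_pos hδγ] using hδ, hg δ⟩
    · exact Or.inl (if_neg hδγ)
  have hA : BddAbove (H ∩ Iio γ) := hH.mono inter_subset_left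
  have hAH : otype (H ∩ Iio γ) < otype H := otype_lt_of_forall_lt_mem hH inter_subset_left hcH
    fun x hx => hx.2.trans_le (not_lt.1 hcγ)
  calc otype (g '' H) ≤ otype (insert 0 (H ∩ Iio γ)) := otype_mono (hA.insert 0) hgH
    _ ≤ otype (H ∩ Iio γ) + 1 := otype_insert_zero_le hA
    _ ≤ otype H := Order.add_one_le_of_lt hAH

theorem OrdCompact.exists_subcover {β : Ordinal.{u}} {H : Set Ordinal.{u}} (hH : BddAbove H)
    (h : OrdCompact β (otype.{u, u} H) X τ) {O : Ordinal.{u} → Set X} (hO : ∀ δ ∈ H, O δ ∈ τ)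
    (hcov : ⋃ δ ∈ H, O δ = Set.univ) : ∃ H' ⊆ H, otype H' < β ∧ ⋃ δ ∈ H', O δ = Set.univ := by
  obtain ⟨e⟩ := hH.nonempty_orderIso_otype
  let g (δ : Ordinal.{u}) : Ordinal.{u} := if hδ : δ < otype H then e.symm ⟨δ, hδ⟩ else 0
  have hgH (δ : Ordinal.{u}) (hδ : δ < otype H) : g δ ∈ H := by
    simp only [g, dif_pos hδ, Subtype.coe_prop]
  have hg : StrictMonoOn g (Iio (otype H)) := fun δ (hδ : δ < _) ε (hε : ε < _) hδε => by
    simp only [g, dif_pos hδ, dif_pos hε]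
    exact e.symm.strictMono (Subtype.mk_lt_mk.2 hδε)
  have hgcov : ⋃ δ ∈ Iio (otype H), O (g δ) = Set.univ := by
    refine eq_univ_of_univ_subset (hcov ▸ iUnion₂_subset fun δ hδ => ?_)
    have hge : g (e ⟨δ, hδ⟩) = δ := by
      rw [show g (e ⟨δ, hδ⟩) = e.symm (e ⟨δ, hδ⟩) from dif_pos (e ⟨δ, hδ⟩).2, e.symm_apply_apply]
    exact hge ▸ subset_biUnion_of_mem (u := fun δ => O (g δ)) (e ⟨δ, hδ⟩).2
  obtain ⟨H₁, hH₁, hH₁β, hH₁cov⟩ := h (fun δ => O (g δ)) (fun δ hδ => hO _ (hgH δ hδ)) hgcov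
  refine ⟨g '' H₁, image_subset_iff.2 fun δ hδ => hgH δ (hH₁ hδ), ?_, by rwa [biUnion_image]⟩
  rwa [otype_image_of_strictMonoOn (bddAbove_Iio.mono hH₁) (hg.mono hH₁)]

theorem ordCompact_of_forall_between {β α : Ordinal.{u}}
    (h : ∀ γ, β ≤ γ → γ ≤ α → OrdCompact γ γ X τ) : OrdCompact β α X τ := by
  induction α using WellFoundedLT.induction with
  | _ α IH =>
  rcases lt_or_ge α β with hαβ | hβα
  · exact ordCompact_of_lt hαβ
  intro O hO hcov
  obtain ⟨H, hHα, hHotype, hHcov⟩ := h α hβα le_rfl O hO hcov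
  have hHcomp : OrdCompact β (otype H) X τ :=
    IH _ hHotype fun γ hβγ hγH => h γ hβγ (hγH.trans hHotype.le)
  obtain ⟨H', hH'H, hH'β, hH'cov⟩ := hHcomp.exists_subcover (bddAbove_Iio.mono hHα)
    (fun δ hδ => hO δ (hHα hδ)) hHcov
  exact ⟨H', hH'H.trans hHα, hH'β, hH'cov⟩

end OrdCompact

theorem ordCompact_iff_forall_between_general {β α : Ordinal} (hβ : β ≠ 0)
    {X : Type*} {τ : Set (Set X)} :
    OrdCompact β α X τ ↔ ∀ γ : Ordinal, β ≤ γ → γ ≤ α → OrdCompact γ γ X τ :=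
  ⟨fun h _ hβγ hγα => (h.of_le (ne_bot_of_le_ne_bot hβ hβγ) hγα).mono_left hβγ,
    ordCompact_of_forall_between⟩

/-- Proposition 2.3(2): for nonzero ordinals `β ≤ α`, `(X, τ)` is `[β, α]`-compact iff it is
`[γ, γ]`-compact for every `γ` with `β ≤ γ ≤ α`. -/
theorem ordCompact_iff_forall_between {β α : Ordinal} (hβ : β ≠ 0) (hα : α ≠ 0)
    (hβα : β ≤ α) {X : Type*} (hX : Nonempty X) {τ : Set (Set X)} (hτ : τ.Nonempty) :
    OrdCompact β α X τ ↔ ∀ γ : Ordinal, β ≤ γ → γ ≤ α → OrdCompact γ γ X τ :=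
  ordCompact_iff_forall_between_general hβ
end

section
/- Let γ and α be ordinals such that either γ or α is infinite and γ + α is nonzero, X a nonempty set, and τ a nonempty family of subsets of X. If (X, τ) is [γ + α, γ + α]-compact, then (X, τ) is [γ + α + α, γ + α + α]-compact (and hence [γ + α·n, γ + α·n]-compact for every n < ω). -/
/-!
Compactness transfers along maps of indices: if `g` maps `α` onto `α'` and sends every subset of
`α` of order type `< β` to a set of order type `< β'`, then `[β, α]`-compactness gives
`[β', α']`-compactness (pull an `α'`-indexed cover back along `g`, push the subcover forward).

If `α = n` is finite and `γ` infinite, then `n + γ = γ`, and moving `[0, n)` to the top of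
`γ + n + n` is such a map from `γ + n`: a set of type `t < γ + n` goes to one of type at most
`t + n < γ + n + n`. If `α = μ + n` with `μ = ω * (α / ω) ≥ ω`, then `2 * μ = μ`, so the block
`[γ, γ + μ)` unzips into its even and odd halves, each of type `μ`. Cutting `H` at `γ` and `γ + μ`
into pieces of types `a, b, c`, its image has type at most `a + b + (b + c)`, which stays below
`γ + μ + μ + n` when `a + b + c < γ + μ + n`; in the critical case `b = μ`, `c = n` this is
absorption: `μ < d + μ` forces `μ + μ < d + μ + μ`.
-/

open Ordinal Set Cardinal

universe u

section TypeLT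

variable {α β : Type u} [LinearOrder α] [WellFoundedLT α] [LinearOrder β] [WellFoundedLT β]

theorem Ordinal.type_union_of_forall_lt {s t : Set α} (h : ∀ a ∈ s, ∀ b ∈ t, a < b) :
    typeLT ↥(s ∪ t) = typeLT s + typeLT t := by
  classical
  have hdisj : Disjoint s t := Set.disjoint_left.2 fun a has hat => (h a has a hat).false
  rw [← type_sum_lex]
  refine (RelIso.ordinalType_congr ⟨(Equiv.Set.union hdisj).symm, ?_⟩).symm
  rintro (⟨a, ha⟩ | ⟨a, ha⟩) (⟨b, hb⟩ | ⟨b, hb⟩)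
  · simp
  · simp [h a ha b hb]
  · simpa using (h b hb a ha).not_gt
  · simp

theorem StrictMonoOn.type_image {f : α → β} {s : Set α} (hf : StrictMonoOn f s) :
    typeLT ↥(f '' s) = typeLT s :=
  (hf.orderIso f s).ordinalType_congr.symm

theorem Ordinal.type_inter_union {s t t' : Set α} (h : ∀ a ∈ t, ∀ b ∈ t', a < b) :
    typeLT ↥(s ∩ (t ∪ t')) = typeLT ↥(s ∩ t) + typeLT ↥(s ∩ t') := by
  rw [inter_union_distrib_left]
  exact type_union_of_forall_lt fun a ha b hb => h a ha.2 b hb.2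

theorem Ordinal.type_image_eq_add {g : α → β} {s P Q : Set α} {c : β} (hs : s ⊆ P ∪ Q)
    (hP : StrictMonoOn g P) (hQ : StrictMonoOn g Q) (hPc : ∀ x ∈ P, g x < c)
    (hQc : ∀ x ∈ Q, c ≤ g x) :
    typeLT ↥(g '' s) = typeLT ↥(s ∩ P) + typeLT ↥(s ∩ Q) := by
  have himage : g '' s = g '' (s ∩ P) ∪ g '' (s ∩ Q) := by
    rw [← image_union, ← inter_union_distrib_left, inter_eq_left.2 hs]
  rw [himage, type_union_of_forall_lt, (hP.mono inter_subset_right).type_image,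
    (hQ.mono inter_subset_right).type_image]
  rintro _ ⟨x, hx, rfl⟩ _ ⟨y, hy, rfl⟩
  exact (hPc x hx.2).trans_le (hQc y hy.2)

end TypeLT

namespace Ordinal

theorem type_le_of_subset_Ico {S : Set Ordinal.{u}} {a b : Ordinal.{u}}
    (hS : S ⊆ Ico a (a + b)) : typeLT S ≤ lift.{u + 1} b := by
  have hsub : StrictMonoOn (· - a) S := fun x hx y hy hxy => by
    simpa [Ordinal.sub_lt_of_le (hS hx).1, Ordinal.add_sub_cancel_of_le (hS hy).1] using hxy
  rw [← hsub.type_image, ← type_lt_Iio]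
  refine type_mono ?_
  rintro _ ⟨x, hx, rfl⟩
  exact (Ordinal.sub_lt_of_le (hS hx).1).2 (hS hx).2

theorem add_natCast_lt_add_natCast {x y : Ordinal} (h : x < y) (n : ℕ) : x + n < y + n := by
  induction n with
  | zero => simpa using h
  | succ n ih =>
    rw [Nat.cast_succ, ← add_assoc, ← add_assoc, ← Order.succ_eq_add_one (x + n),
      ← Order.succ_eq_add_one (y + n)]
    exact Order.succ_lt_succ ih

theorem add_add_self_lt_of_lt_add {d x : Ordinal} (h : x < d + x) : x + x < d + (x + x) := by
  have hx : x < d * ω := by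
    by_contra! hle
    exact h.ne (add_eq_right_iff_mul_omega0_le.2 hle).symm
  have hxx : x + x < d * ω :=
    isPrincipal_add_mul_of_isPrincipal_add d one_lt_omega0.ne' isPrincipal_add_omega0 hx hx
  refine le_add_self.lt_of_ne fun heq => hxx.not_ge ?_
  exact add_eq_right_iff_mul_omega0_le.1 heq.symm

theorem add_add_lt_of_add_lt {a b c γ μ : Ordinal} {n : ℕ} (ha : a ≤ γ) (hb : b ≤ μ)
    (hc : c ≤ n) (h : a + (b + c) < γ + μ + n) : a + b + (b + c) < γ + μ + μ + n := by
  rcases hb.lt_or_eq with hb | rfl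
  · have hbc : b + c < μ + n := (add_le_add le_rfl hc).trans_lt (add_natCast_lt_add_natCast hb n)
    calc a + b + (b + c) = a + (b + (b + c)) := add_assoc ..
      _ < a + (b + (μ + n)) := by gcongr
      _ ≤ γ + (μ + (μ + n)) := by gcongr
      _ = γ + μ + μ + n := by simp only [add_assoc]
  rcases hc.lt_or_eq with hc | rfl
  · calc a + b + (b + c) = a + b + b + c := by simp only [add_assoc]
      _ ≤ γ + b + b + c := by gcongr
      _ < γ + b + b + n := by gcongr
  obtain ⟨d, rfl⟩ := exists_add_of_le ha
  have hb : b < d + b := by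
    simp only [add_assoc, add_lt_add_iff_left] at h
    rw [← add_assoc] at h
    exact lt_of_add_lt_add_right h
  calc a + b + (b + n) = a + (b + b) + n := by simp only [add_assoc]
    _ < a + (d + (b + b)) + n :=
      add_natCast_lt_add_natCast ((add_lt_add_iff_left a).2 (add_add_self_lt_of_lt_add hb)) n
    _ = a + d + b + b + n := by simp only [add_assoc]

theorem type_inter_Iio_add_type_inter_Ici_lt {γ μ : Ordinal.{u}} {n : ℕ}
    {H : Set Ordinal.{u}} (hH : H ⊆ Iio (γ + μ + n)) (hHβ : typeLT H < lift.{u + 1} (γ + μ + n)) :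
    typeLT ↥(H ∩ Iio (γ + μ)) + typeLT ↥(H ∩ Ici γ) < lift.{u + 1} (γ + μ + μ + n) := by
  have hγ : γ ≤ γ + μ := le_self_add
  have hlow : typeLT ↥(H ∩ Iio (γ + μ)) =
      typeLT ↥(H ∩ Iio γ) + typeLT ↥(H ∩ Ico γ (γ + μ)) := by
    rw [← Iio_union_Ico_eq_Iio hγ, type_inter_union fun a ha b hb => ha.trans_le hb.1]
  have hhigh : typeLT ↥(H ∩ Ici γ) =
      typeLT ↥(H ∩ Ico γ (γ + μ)) + typeLT ↥(H ∩ Ici (γ + μ)) := by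
    rw [← Ico_union_Ici_eq_Ici hγ, type_inter_union fun a ha b hb => ha.2.trans_le hb]
  have hall : typeLT H = typeLT ↥(H ∩ Iio γ) + typeLT ↥(H ∩ Ici γ) := by
    rw [← type_inter_union fun a ha b hb => ha.trans_le hb, Iio_union_Ici, inter_univ]
  have htail : H ∩ Ici (γ + μ) ⊆ Ico (γ + μ) (γ + μ + n) := fun δ hδ => ⟨hδ.2, hH hδ.1⟩
  rw [hlow, hhigh]
  rw [hall, hhigh] at hHβ
  simp only [lift_add, lift_natCast] at hHβ ⊢
  refine add_add_lt_of_add_lt ?_ ?_ ?_ hHβ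
  · exact (type_mono inter_subset_right).trans_eq (type_lt_Iio γ)
  · exact type_le_of_subset_Ico inter_subset_right
  · simpa using type_le_of_subset_Ico htail

noncomputable def rotateInitial (n γ δ : Ordinal) : Ordinal :=
  if δ < n then γ + n + δ else δ - n

section RotateInitial

variable {n γ : Ordinal.{u}}

theorem rotateInitial_of_lt {δ : Ordinal} (h : δ < n) : rotateInitial n γ δ = γ + n + δ :=
  if_pos h

theorem rotateInitial_add (e : Ordinal) : rotateInitial n γ (n + e) = e := by
  rw [rotateInitial, if_neg (not_lt.2 le_self_add), Ordinal.add_sub_cancel]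

theorem add_lt_iff_of_add_eq (hγ : n + γ = γ) {e : Ordinal} : n + e < γ + n ↔ e < γ + n := by
  nth_rw 1 [← hγ, add_assoc]
  exact add_lt_add_iff_left n

theorem mapsTo_rotateInitial (hγ : n + γ = γ) :
    MapsTo (rotateInitial n γ) (Iio (γ + n)) (Iio (γ + n + n)) := by
  intro δ hδ
  rcases lt_or_ge δ n with hδn | hδn
  · rw [mem_Iio, rotateInitial_of_lt hδn]
    exact (add_lt_add_iff_left _).2 hδn
  · obtain ⟨e, rfl⟩ := exists_add_of_le hδn
    rw [mem_Iio, rotateInitial_add]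
    exact ((add_lt_iff_of_add_eq hγ).1 hδ).trans_le le_self_add

theorem surjOn_rotateInitial (hγ : n + γ = γ) :
    SurjOn (rotateInitial n γ) (Iio (γ + n)) (Iio (γ + n + n)) := by
  intro ε hε
  rcases lt_or_ge ε (γ + n) with hεγ | hεγ
  · exact ⟨n + ε, (add_lt_iff_of_add_eq hγ).2 hεγ, rotateInitial_add ε⟩
  · obtain ⟨r, rfl⟩ := exists_add_of_le hεγ
    have hr : r < n := (add_lt_add_iff_left _).1 hε
    exact ⟨r, hr.trans_le le_add_self, rotateInitial_of_lt hr⟩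

theorem type_image_rotateInitial_le (hγ : n + γ = γ) {H : Set Ordinal.{u}}
    (hH : H ⊆ Iio (γ + n)) : typeLT ↥(rotateInitial n γ '' H) ≤ typeLT H + lift.{u + 1} n := by
  have hcover : H ⊆ (n + ·) '' Iio (γ + n) ∪ Iio n := fun δ hδ => by
    rcases lt_or_ge δ n with hδn | hδn
    · exact Or.inr hδn
    · obtain ⟨e, rfl⟩ := exists_add_of_le hδn
      exact Or.inl ⟨e, (add_lt_iff_of_add_eq hγ).1 (hH hδ), rfl⟩
  have hshift : StrictMonoOn (rotateInitial n γ) ((n + ·) '' Iio (γ + n)) := by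
    rintro _ ⟨e, -, rfl⟩ _ ⟨e', -, rfl⟩ hee'
    rw [rotateInitial_add, rotateInitial_add]
    exact (add_lt_add_iff_left _).1 hee'
  have hmove : StrictMonoOn (rotateInitial n γ) (Iio n) := fun δ hδ δ' hδ' hδδ' => by
    rw [rotateInitial_of_lt hδ, rotateInitial_of_lt hδ']
    exact (add_lt_add_iff_left _).2 hδδ'
  rw [type_image_eq_add hcover hshift hmove (c := γ + n)
    (by rintro _ ⟨e, he, rfl⟩; rwa [rotateInitial_add])
    (fun δ hδ => (rotateInitial_of_lt hδ).symm ▸ le_self_add)]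
  exact add_le_add (type_mono inter_subset_left)
    ((type_mono inter_subset_right).trans_eq (type_lt_Iio n))

end RotateInitial

theorem two_mul_add_lt {μ ξ i : Ordinal} (hμ : 2 * μ = μ) (hξ : ξ < μ) (hi : i < 2) :
    2 * ξ + i < μ :=
  calc 2 * ξ + i < 2 * ξ + 2 := by gcongr
    _ = 2 * (ξ + 1) := by rw [mul_add_one]
    _ ≤ 2 * μ := by gcongr; exact Order.add_one_le_of_lt hξ
    _ = μ := hμ

/-- When `2 * μ = μ`, a point `γ + (2 * ξ + i)` of the block `[γ, γ + μ)` (with `i < 2`) goes to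
`γ + μ * i + ξ`: the even half of the block fills `[γ, γ + μ)`, the odd half `[γ + μ, γ + μ + μ)`.
Points above the block move up by `μ`. -/
noncomputable def splitEvenOdd (γ μ δ : Ordinal) : Ordinal :=
  if δ < γ then δ
  else if δ < γ + μ then γ + μ * ((δ - γ) % 2) + (δ - γ) / 2
  else γ + μ + (δ - γ)

section SplitEvenOdd

variable {γ μ : Ordinal.{u}}

theorem splitEvenOdd_of_lt {δ : Ordinal} (h : δ < γ) : splitEvenOdd γ μ δ = δ := if_pos h

theorem splitEvenOdd_add_two_mul_add (hμ : 2 * μ = μ) {ξ i : Ordinal} (hξ : ξ < μ) (hi : i < 2) :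
    splitEvenOdd γ μ (γ + (2 * ξ + i)) = γ + μ * i + ξ := by
  have hmid : γ + (2 * ξ + i) < γ + μ := (add_lt_add_iff_left γ).2 (two_mul_add_lt hμ hξ hi)
  rw [splitEvenOdd, if_neg (not_lt.2 le_self_add), if_pos hmid, Ordinal.add_sub_cancel,
    mul_add_mod_self, mod_eq_of_lt hi, mul_add_div _ two_ne_zero, div_eq_zero_of_lt hi, add_zero]

theorem splitEvenOdd_add_two_mul (hμ : 2 * μ = μ) {ξ : Ordinal} (hξ : ξ < μ) :
    splitEvenOdd γ μ (γ + 2 * ξ) = γ + ξ := by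
  simpa using splitEvenOdd_add_two_mul_add (γ := γ) hμ hξ two_pos

theorem splitEvenOdd_add_two_mul_add_one (hμ : 2 * μ = μ) {ξ : Ordinal} (hξ : ξ < μ) :
    splitEvenOdd γ μ (γ + (2 * ξ + 1)) = γ + μ + ξ := by
  simpa using splitEvenOdd_add_two_mul_add (γ := γ) hμ hξ one_lt_two

theorem splitEvenOdd_add_add (r : Ordinal) : splitEvenOdd γ μ (γ + μ + r) = γ + μ + μ + r := by
  rw [splitEvenOdd, if_neg (not_lt.2 (le_self_add.trans le_self_add)),
    if_neg (not_lt.2 le_self_add), add_assoc γ μ r, Ordinal.add_sub_cancel, ← add_assoc]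

theorem strictMonoOn_splitEvenOdd_low (hμ : 2 * μ = μ) :
    StrictMonoOn (splitEvenOdd γ μ) (Iio γ ∪ (fun ξ => γ + 2 * ξ) '' Iio μ) := by
  rintro δ (hδ | ⟨ξ, hξ, rfl⟩) δ' (hδ' | ⟨ξ', hξ', rfl⟩) hlt
  · rwa [splitEvenOdd_of_lt hδ, splitEvenOdd_of_lt hδ']
  · rw [splitEvenOdd_of_lt hδ, splitEvenOdd_add_two_mul hμ hξ']
    exact hδ.trans_le le_self_add
  · exact absurd (hlt.trans hδ') (not_lt.2 le_self_add)
  · rw [splitEvenOdd_add_two_mul hμ hξ, splitEvenOdd_add_two_mul hμ hξ']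
    exact (add_lt_add_iff_left γ).2 (lt_of_mul_lt_mul_left' ((add_lt_add_iff_left γ).1 hlt))

theorem strictMonoOn_splitEvenOdd_high (hμ : 2 * μ = μ) :
    StrictMonoOn (splitEvenOdd γ μ) ((fun ξ => γ + (2 * ξ + 1)) '' Iio μ ∪ range (γ + μ + ·)) := by
  rintro δ (⟨ξ, hξ, rfl⟩ | ⟨r, rfl⟩) δ' (⟨ξ', hξ', rfl⟩ | ⟨r', rfl⟩) hlt
  · rw [splitEvenOdd_add_two_mul_add_one hμ hξ, splitEvenOdd_add_two_mul_add_one hμ hξ']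
    have hlt' : 2 * ξ < 2 * ξ' := lt_of_add_lt_add_right ((add_lt_add_iff_left γ).1 hlt)
    exact (add_lt_add_iff_left _).2 (lt_of_mul_lt_mul_left' hlt')
  · rw [splitEvenOdd_add_two_mul_add_one hμ hξ, splitEvenOdd_add_add, add_assoc (γ + μ)]
    exact (add_lt_add_iff_left _).2 (hξ.trans_le le_self_add)
  · have hodd : γ + (2 * ξ' + 1) < γ + μ :=
      (add_lt_add_iff_left γ).2 (two_mul_add_lt hμ hξ' one_lt_two)
    exact absurd (hlt.trans hodd) (not_lt.2 le_self_add)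
  · rw [splitEvenOdd_add_add, splitEvenOdd_add_add]
    exact (add_lt_add_iff_left _).2 ((add_lt_add_iff_left _).1 hlt)

theorem mem_splitEvenOdd_pieces (hμ : 2 * μ = μ) (δ : Ordinal) :
    δ ∈ (Iio γ ∪ (fun ξ => γ + 2 * ξ) '' Iio μ) ∪
      ((fun ξ => γ + (2 * ξ + 1)) '' Iio μ ∪ range (γ + μ + ·)) := by
  rcases lt_or_ge δ γ with hδ | hδ
  · exact Or.inl (Or.inl hδ)
  obtain ⟨η, rfl⟩ := exists_add_of_le hδ
  rcases lt_or_ge η μ with hη | hη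
  · have hξ : η / 2 < μ := (lt_mul_iff_div_lt two_ne_zero).1 (hμ.symm ▸ hη)
    rcases Order.le_one_iff.1 (Order.lt_two_iff.1 (mod_lt η two_ne_zero)) with h0 | h1
    · exact Or.inl (Or.inr ⟨η / 2, hξ, by
        dsimp only
        conv_rhs => rw [← div_add_mod η 2, h0, add_zero]⟩)
    · exact Or.inr (Or.inl ⟨η / 2, hξ, by
        dsimp only
        conv_rhs => rw [← div_add_mod η 2, h1]⟩)
  · obtain ⟨r, rfl⟩ := exists_add_of_le hη
    exact Or.inr (Or.inr ⟨r, add_assoc γ μ r⟩)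

theorem type_image_splitEvenOdd_le (hμ : 2 * μ = μ) (H : Set Ordinal.{u}) :
    typeLT ↥(splitEvenOdd γ μ '' H) ≤ typeLT ↥(H ∩ Iio (γ + μ)) + typeLT ↥(H ∩ Ici γ) := by
  have heven : ∀ ξ < μ, γ + 2 * ξ < γ + μ := fun ξ hξ =>
    (add_lt_add_iff_left γ).2 (by simpa using two_mul_add_lt hμ hξ two_pos)
  rw [type_image_eq_add (fun δ _ => mem_splitEvenOdd_pieces hμ δ)
    (strictMonoOn_splitEvenOdd_low hμ) (strictMonoOn_splitEvenOdd_high hμ) (c := γ + μ)]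
  · refine add_le_add (type_mono (inter_subset_inter_right H ?_))
      (type_mono (inter_subset_inter_right H ?_))
    · rintro _ (hδ | ⟨ξ, hξ, rfl⟩)
      exacts [(mem_Iio.1 hδ).trans_le le_self_add, heven ξ hξ]
    · rintro _ (⟨ξ, -, rfl⟩ | ⟨r, rfl⟩)
      exacts [mem_Ici.2 le_self_add, mem_Ici.2 (le_self_add.trans le_self_add)]
  · rintro _ (hδ | ⟨ξ, hξ, rfl⟩)
    · rw [splitEvenOdd_of_lt hδ]
      exact hδ.trans_le le_self_add
    · rw [splitEvenOdd_add_two_mul hμ hξ]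
      exact (add_lt_add_iff_left γ).2 hξ
  · rintro _ (⟨ξ, hξ, rfl⟩ | ⟨r, rfl⟩)
    · rw [splitEvenOdd_add_two_mul_add_one hμ hξ]
      exact le_self_add
    · rw [splitEvenOdd_add_add]
      exact le_self_add.trans le_self_add

theorem mapsTo_splitEvenOdd (hμ : 2 * μ = μ) (n : ℕ) :
    MapsTo (splitEvenOdd γ μ) (Iio (γ + μ + n)) (Iio (γ + μ + μ + n)) := by
  have hγμμ : γ + μ ≤ γ + μ + μ + n := le_self_add.trans le_self_add
  intro δ hδ
  rcases mem_splitEvenOdd_pieces (γ := γ) hμ δ with (hδγ | ⟨ξ, hξ, rfl⟩) | (⟨ξ, hξ, rfl⟩ | ⟨r, rfl⟩)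
  · rw [mem_Iio, splitEvenOdd_of_lt hδγ]
    exact hδγ.trans_le (le_self_add.trans hγμμ)
  · rw [mem_Iio, splitEvenOdd_add_two_mul hμ hξ]
    exact ((add_lt_add_iff_left γ).2 hξ).trans_le hγμμ
  · rw [mem_Iio, splitEvenOdd_add_two_mul_add_one hμ hξ]
    exact ((add_lt_add_iff_left _).2 hξ).trans_le le_self_add
  · rw [mem_Iio, splitEvenOdd_add_add]
    exact (add_lt_add_iff_left _).2 ((add_lt_add_iff_left _).1 hδ)

theorem surjOn_splitEvenOdd (hμ : 2 * μ = μ) (n : ℕ) :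
    SurjOn (splitEvenOdd γ μ) (Iio (γ + μ + n)) (Iio (γ + μ + μ + n)) := by
  have hγμ : γ + μ ≤ γ + μ + n := le_self_add
  intro ε hε
  rcases lt_or_ge ε γ with hεγ | hεγ
  · exact ⟨ε, hεγ.trans_le (le_self_add.trans hγμ), splitEvenOdd_of_lt hεγ⟩
  obtain ⟨ξ, rfl⟩ := exists_add_of_le hεγ
  rcases lt_or_ge ξ μ with hξ | hξ
  · refine ⟨γ + 2 * ξ, ?_, splitEvenOdd_add_two_mul hμ hξ⟩
    exact ((add_lt_add_iff_left γ).2 (by simpa using two_mul_add_lt hμ hξ two_pos)).trans_le hγμ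
  obtain ⟨ξ, rfl⟩ := exists_add_of_le hξ
  rcases lt_or_ge ξ μ with hξ | hξ
  · refine ⟨γ + (2 * ξ + 1), ?_, by rw [splitEvenOdd_add_two_mul_add_one hμ hξ, add_assoc]⟩
    exact ((add_lt_add_iff_left γ).2 (two_mul_add_lt hμ hξ one_lt_two)).trans_le hγμ
  obtain ⟨r, rfl⟩ := exists_add_of_le hξ
  simp only [← add_assoc] at hε
  have hr : r < n := (add_lt_add_iff_left _).1 hε
  exact ⟨γ + μ + r, (add_lt_add_iff_left _).2 hr, by
    rw [splitEvenOdd_add_add]; simp only [add_assoc]⟩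

end SplitEvenOdd

end Ordinal

theorem lift_otype_eq_type {S : Set Ordinal.{u}} {a : Ordinal.{u}} (hS : S ⊆ Iio a) :
    lift.{u + 1} (otype.{u, u} S) = typeLT S := by
  obtain ⟨o, ho⟩ := mem_range_lift_of_le ((type_mono hS).trans (type_lt_Iio a).le)
  have hiso : ∀ o', Nonempty (S ≃o Iio o') ↔ o' = o := fun o' => by
    rw [← Ordinal.lift_inj.{u + 1, u}, ho, ← type_lt_Iio, eq_comm, type_eq]
    exact ⟨fun ⟨e⟩ => ⟨e.toRelIsoLT⟩, fun ⟨e⟩ => ⟨OrderIso.ofRelIsoLT e⟩⟩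
  have hset : {o' : Ordinal.{u} | Nonempty (S ≃o Iio o')} = {o} := Set.ext hiso
  rw [otype, hset, csInf_singleton, ho]

theorem OrdCompact.of_surjOn {β α β' α' : Ordinal.{u}} {X : Type*} {τ : Set (Set X)}
    (g : Ordinal.{u} → Ordinal.{u}) (hmaps : MapsTo g (Iio α) (Iio α'))
    (hsurj : SurjOn g (Iio α) (Iio α'))
    (htype : ∀ H ⊆ Iio α, typeLT H < lift.{u + 1} β → typeLT ↥(g '' H) < lift.{u + 1} β')
    (h : OrdCompact β α X τ) : OrdCompact β' α' X τ := by
  intro O hO hcover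
  have hcover' : (⋃ δ ∈ Iio α, O (g δ)) = Set.univ := by
    refine eq_univ_of_forall fun x => ?_
    obtain ⟨ε, hε, hx⟩ := mem_iUnion₂.1 (hcover ▸ mem_univ x)
    obtain ⟨δ, hδ, rfl⟩ := hsurj hε
    exact mem_iUnion₂.2 ⟨δ, hδ, hx⟩
  obtain ⟨H, hHα, hHβ, hHcover⟩ := h (O ∘ g) (fun δ hδ => hO _ (hmaps hδ)) hcover'
  have hgH : g '' H ⊆ Iio α' := (hmaps.mono_left hHα).image_subset
  refine ⟨g '' H, hgH, ?_, by rwa [biUnion_image]⟩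
  rw [← Ordinal.lift_lt.{u + 1}, lift_otype_eq_type hgH]
  exact htype H hHα (by rwa [← lift_otype_eq_type hHα, Ordinal.lift_lt])

theorem OrdCompact.add_natCast_add_natCast {γ : Ordinal.{u}} {n : ℕ} (hγ : (n : Ordinal) + γ = γ)
    {X : Type*} {τ : Set (Set X)} (h : OrdCompact (γ + n) (γ + n) X τ) :
    OrdCompact (γ + n + n) (γ + n + n) X τ := by
  refine of_surjOn _ (mapsTo_rotateInitial hγ) (surjOn_rotateInitial hγ) (fun H hH hHβ => ?_) h
  calc typeLT ↥(rotateInitial n γ '' H) ≤ typeLT H + n := by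
        simpa using type_image_rotateInitial_le hγ hH
    _ < lift.{u + 1} (γ + n) + n := add_natCast_lt_add_natCast hHβ n
    _ = lift.{u + 1} (γ + n + n) := by simp

theorem OrdCompact.add_add_add_natCast {γ μ : Ordinal.{u}} (hμ : 2 * μ = μ) (n : ℕ) {X : Type*}
    {τ : Set (Set X)} (h : OrdCompact (γ + μ + n) (γ + μ + n) X τ) :
    OrdCompact (γ + μ + μ + n) (γ + μ + μ + n) X τ :=
  of_surjOn _ (mapsTo_splitEvenOdd hμ n) (surjOn_splitEvenOdd hμ n)
    (fun H hH hHβ => (type_image_splitEvenOdd_le hμ H).trans_lt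
      (type_inter_Iio_add_type_inter_Ici_lt hH hHβ)) h

theorem OrdCompact.add_add {γ α : Ordinal.{u}} (hinf : ω ≤ γ ∨ ω ≤ α) {X : Type*}
    {τ : Set (Set X)} (h : OrdCompact (γ + α) (γ + α) X τ) :
    OrdCompact (γ + α + α) (γ + α + α) X τ := by
  rcases lt_or_ge α ω with hα | hα
  · obtain ⟨n, rfl⟩ := lt_omega0.1 hα
    exact h.add_natCast_add_natCast (natCast_add_of_omega0_le (hinf.resolve_right hα.not_ge) n)
  set μ := ω * (α / ω)
  obtain ⟨n, hn⟩ := lt_omega0.1 (mod_lt α omega0_ne_zero)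
  have hα_eq : α = μ + n := hn ▸ (div_add_mod α ω).symm
  have hωμ : ω ≤ μ := le_mul_left ω ((div_pos omega0_ne_zero).2 hα)
  have hμ : 2 * μ = μ := mul_omega0_dvd two_pos (natCast_lt_omega0 2) (dvd_mul_right ω _)
  have hαα : γ + α + α = γ + μ + μ + n := by
    simp only [hα_eq, add_assoc]
    rw [← add_assoc (n : Ordinal) μ, natCast_add_of_omega0_le hωμ]
  rw [hα_eq, ← add_assoc] at h
  rw [hαα]
  exact h.add_add_add_natCast hμ n

theorem ordCompact_add_add_general {γ α : Ordinal} (hinf : ω ≤ γ ∨ ω ≤ α)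
    {X : Type*} {τ : Set (Set X)}
    (h : OrdCompact (γ + α) (γ + α) X τ) :
    OrdCompact (γ + α + α) (γ + α + α) X τ ∧
      ∀ n : ℕ, n ≠ 0 → OrdCompact (γ + α * n) (γ + α * n) X τ := by
  have hmul : ∀ m : ℕ, OrdCompact (γ + α * m + α) (γ + α * m + α) X τ := by
    intro m
    induction m with
    | zero => simpa using h
    | succ m ih =>
      rw [Nat.cast_succ, mul_add_one, ← add_assoc]
      exact ih.add_add (hinf.imp_left fun hγ => hγ.trans le_self_add)
  refine ⟨h.add_add hinf, fun n hn => ?_⟩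
  obtain ⟨m, rfl⟩ := Nat.exists_eq_succ_of_ne_zero hn
  rw [Nat.cast_succ, mul_add_one, ← add_assoc]
  exact hmul m

/-- Corollary 2.7(2): if either `γ` or `α` is infinite, then
`[γ + α, γ + α]`-compactness implies `[γ + α + α, γ + α + α]`-compactness, hence also
`[γ + α·n, γ + α·n]`-compactness for every (nonzero) `n < ω`. -/
theorem ordCompact_add_add {γ α : Ordinal} (hinf : ω ≤ γ ∨ ω ≤ α) (hne : γ + α ≠ 0)
    {X : Type*} (hX : Nonempty X) {τ : Set (Set X)} (hτ : τ.Nonempty)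
    (h : OrdCompact (γ + α) (γ + α) X τ) :
    OrdCompact (γ + α + α) (γ + α + α) X τ ∧
      ∀ n : ℕ, n ≠ 0 → OrdCompact (γ + α * n) (γ + α * n) X τ :=
  ordCompact_add_add_general hinf h
end

section
/- Let α be an ordinal whose cofinality ν = cf(α) is infinite, X a nonempty set, and τ a nonempty family of subsets of X that is closed under arbitrary unions. If (X, τ) is [ν, ν]-compact, then (X, τ) is [α, α]-compact. -/
open Ordinal Set Cardinal

/-!
Push the `α`-indexed cover forward along a cofinal map `F : cf α → α`: the `cf α`-indexed family
`ξ ↦ ⋃_{δ ≤ F ξ} O δ` is again a cover by members of `τ`, since `τ` is closed under unions. A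
subcover of it indexed by a set `H` of order type `< cf α` has fewer than `cf α` members, so the
`F ξ` with `ξ ∈ H` are all below some `γ < α`, and then `(O δ)_{δ < γ}`, of order type `γ`, covers.
-/

universe u

theorem otype_Iio_le (o : Ordinal) : otype (Iio o) ≤ o :=
  csInf_le' ⟨OrderIso.refl _⟩

/-- Boundedness makes `S` small; for a set that is not small the infimum defining `otype S` is
taken over the empty set and is the junk value `0`. -/
theorem nonempty_orderIso_Iio_otype {S : Set Ordinal.{u}} {b : Ordinal.{u}} (hS : S ⊆ Iio b) :
    Nonempty (S ≃o Iio (otype S : Ordinal.{u})) := by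
  suffices ∃ o, Nonempty (S ≃o Iio o) from csInf_mem this
  obtain ⟨o, ho⟩ := mem_range_lift_of_le ((type_mono hS).trans (type_lt_Iio b).le)
  rw [← type_lt_Iio] at ho
  exact ⟨o, ⟨.ofRelIsoLT (type_eq.1 ho).some.symm⟩⟩

theorem mk_lt_of_otype_lt_ord {S : Set Ordinal.{u}} {b : Ordinal.{u}} (hS : S ⊆ Iio b)
    {c : Cardinal.{u}} (hc : (otype S : Ordinal.{u}) < c.ord) : #S < Cardinal.lift.{u + 1} c := by
  obtain ⟨e⟩ := nonempty_orderIso_Iio_otype hS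
  rw [e.toEquiv.cardinal_eq, Cardinal.mk_Iio_ordinal, Cardinal.lift_lt]
  exact Cardinal.lt_ord.1 hc

theorem exists_lt_forall_lt_of_otype_lt_cof {S : Set Ordinal.{u}} {b α : Ordinal.{u}}
    (hS : S ⊆ Iio b) (hSα : (otype S : Ordinal.{u}) < α.cof.ord) {F : Ordinal.{u} → Ordinal.{u}}
    (hF : ∀ ξ ∈ S, F ξ < α) : ∃ γ < α, ∀ ξ ∈ S, F ξ < γ := by
  have : Small.{u} S := small_subset hS
  refine ⟨⨆ ξ : S, F ξ + 1, lift_iSup_add_one_lt_of_lt_cof ?_ fun ξ ↦ hF ξ ξ.2, fun ξ hξ ↦ ?_⟩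
  · rw [Cardinal.lift_id'.{u, u + 1}, ← lift_cof]
    exact mk_lt_of_otype_lt_ord hS hSα
  · exact (lt_add_one _).trans_le (Ordinal.le_iSup (fun ξ : S ↦ F ξ + 1) ⟨ξ, hξ⟩)

theorem exists_cofinal_map (α : Ordinal) :
    ∃ F : Ordinal → Ordinal, (∀ ξ < α.cof.ord, F ξ < α) ∧ ∀ δ < α, ∃ ξ < α.cof.ord, δ ≤ F ξ := by
  obtain ⟨f, hf⟩ := exists_isFundamentalSeq (o := α) rfl
  refine ⟨fun ξ ↦ if h : ξ ∈ Iio α.cof.ord then f ⟨ξ, h⟩ else 0, fun ξ hξ ↦ ?_, fun δ hδ ↦ ?_⟩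
  · simpa only [dif_pos (mem_Iio.2 hξ)] using mem_Iio.1 (f ⟨ξ, hξ⟩).2
  · obtain ⟨_, ⟨⟨ξ, hξ⟩, rfl⟩, hle⟩ := hf.isCofinal_range ⟨δ, hδ⟩
    exact ⟨ξ, hξ, by simpa only [dif_pos hξ] using Subtype.coe_le_coe.2 hle⟩

theorem biUnion_mem_of_sUnion_mem {X ι : Type*} {τ : Set (Set X)} (hU : ∀ S ⊆ τ, ⋃₀ S ∈ τ)
    {O : ι → Set X} {s : Set ι} (hO : ∀ i ∈ s, O i ∈ τ) : ⋃ i ∈ s, O i ∈ τ :=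
  sUnion_image O s ▸ hU _ (image_subset_iff.2 hO)

theorem ordCompact_of_cof_general {α : Ordinal}
    {X : Type*} {τ : Set (Set X)}
    (hU : ∀ S ⊆ τ, ⋃₀ S ∈ τ)
    (h : OrdCompact (Ordinal.cof α).ord (Ordinal.cof α).ord X τ) :
    OrdCompact α α X τ := by
  intro O hO hcov
  obtain ⟨F, hFα, hFcofinal⟩ := exists_cofinal_map α
  set O' : Ordinal → Set X := fun ξ ↦ ⋃ δ ∈ Iic (F ξ), O δ
  have hO'τ : ∀ ξ < α.cof.ord, O' ξ ∈ τ := fun ξ hξ ↦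
    biUnion_mem_of_sUnion_mem hU fun δ hδ ↦ hO δ (hδ.trans_lt (hFα ξ hξ))
  have hO'cov : ⋃ ξ ∈ Iio α.cof.ord, O' ξ = Set.univ := by
    refine eq_univ_of_univ_subset (hcov ▸ iUnion₂_subset fun δ hδ ↦ ?_)
    obtain ⟨ξ, hξ, hδξ⟩ := hFcofinal δ hδ
    exact (subset_biUnion_of_mem (u := O) (mem_Iic.2 hδξ)).trans
      (subset_biUnion_of_mem (u := O') hξ)
  obtain ⟨H, hHν, hHo, hHcov⟩ := h O' hO'τ hO'cov
  obtain ⟨γ, hγα, hFγ⟩ :=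
    exists_lt_forall_lt_of_otype_lt_cof hHν hHo fun ξ hξ ↦ hFα ξ (hHν hξ)
  refine ⟨Iio γ, Iio_subset_Iio hγα.le, (otype_Iio_le γ).trans_lt hγα, ?_⟩
  refine eq_univ_of_univ_subset (hHcov ▸ iUnion₂_subset fun ξ hξ ↦ iUnion₂_subset fun δ hδ ↦ ?_)
  exact subset_biUnion_of_mem (u := O) (hδ.trans_lt (hFγ ξ hξ))

/-- Corollary 2.7(8): if `ν = cf α` is infinite and `τ` is closed under arbitrary unions,
then `[ν, ν]`-compactness implies `[α, α]`-compactness. -/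
theorem ordCompact_of_cof {α : Ordinal} (hν : ℵ₀ ≤ Ordinal.cof α)
    {X : Type*} (hX : Nonempty X) {τ : Set (Set X)} (hτ : τ.Nonempty)
    (hU : ∀ S ⊆ τ, ⋃₀ S ∈ τ)
    (h : OrdCompact (Ordinal.cof α).ord (Ordinal.cof α).ord X τ) :
    OrdCompact α α X τ :=
  ordCompact_of_cof_general hU h
end

section
/- Let X be a nonempty set and τ a nonempty family of subsets of X such that (X, τ) is T₁, and let α be an infinite ordinal. Then (X, τ) is [α, α]-compact if and only if (X, τ) is [α + 1, α + 1]-compact. -/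
open Ordinal Set Cardinal

/-- `(X, τ)` is `T₁`: for every `O ∈ τ` and `x ∈ O`, also `O \ {x} ∈ τ`. -/
def IsT1Fam {X : Type*} (τ : Set (Set X)) : Prop :=
  ∀ O ∈ τ, ∀ x ∈ O, O \ {x} ∈ τ

/-!
Order types of sets of ordinals are computed as `typeLT`, one universe up, where they add up
along cuts.

For `[α, α] → [α + 1, α + 1]`: since `1 + α = α`, an `(α + 1)`-indexed cover can be reindexed by
`α` with its last member moved to the front, and a subcover of type `< α` moves back to one of
type `< α + 1`.

For the converse write `α = l + n` with `l` a limit and `n` finite. Given an `α`-indexed cover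
`O`, pick a point `y` of some `O δ₀` with `δ₀ < l` (if there is none, the finitely many
`O (l + i)` already cover). The sets `O δ \ {y}`, which lie in `τ` by `T₁`, together with `O δ₀`
at index `α` form an `(α + 1)`-indexed cover. A subcover of type `≤ α` must use index `α`, so its
part below `α` has type `< α`; adding `δ₀` to that part keeps its type `< α` because `δ₀` lies
below the limit `l`.
-/

universe u

namespace Ordinal

theorem one_add_le_add_one (o : Ordinal.{u}) : 1 + o ≤ o + 1 := by
  rcases lt_or_ge o ω with ho | ho
  · obtain ⟨n, rfl⟩ := lt_omega0.1 ho
    exact_mod_cast (Nat.add_comm 1 n).le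
  · rw [one_add_of_omega0_le ho]
    exact le_self_add

section LinearOrder

variable {α : Type u} [LinearOrder α] [WellFoundedLT α]

theorem type_union_of_forall_lt_s18 {S T : Set α} (h : ∀ a ∈ S, ∀ b ∈ T, a < b) :
    typeLT ↥(S ∪ T) = typeLT S + typeLT T := by
  classical
  have hST : Disjoint S T := Set.disjoint_left.2 fun a ha ha' => (h a ha a ha').false
  rw [← type_sum_lex]
  refine (RelIso.ordinalType_congr ⟨(Equiv.Set.union hST).symm, ?_⟩).symm
  rintro (⟨a, ha⟩ | ⟨a, ha⟩) (⟨b, hb⟩ | ⟨b, hb⟩)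
  · simp
  · simp [h a ha b hb]
  · simp [lt_asymm (h b hb a ha)]
  · simp

theorem type_inter_Iio_add_type_inter_Ici (S : Set α) (c : α) :
    typeLT ↥(S ∩ Iio c) + typeLT ↥(S ∩ Ici c) = typeLT S := by
  rw [← type_union_of_forall_lt_s18 fun a ha b hb => ha.2.trans_le hb.2, ← inter_union_distrib_left,
    Iio_union_Ici, inter_univ]

theorem type_singleton (a : α) : typeLT ({a} : Set α) = 1 :=
  type_eq_one_of_unique _

theorem type_insert_le (a : α) (S : Set α) : typeLT ↥(insert a S) ≤ typeLT S + 1 := by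
  by_cases ha : a ∈ S
  · rw [insert_eq_of_mem ha]
    exact le_self_add
  have hlow : insert a S ∩ Iio a = S ∩ Iio a := insert_inter_of_notMem self_notMem_Iio
  have hhigh : insert a S ∩ Ici a = {a} ∪ S ∩ Ici a := by
    rw [insert_inter_of_mem self_mem_Ici, insert_eq]
  have hgt : ∀ b ∈ S ∩ Ici a, a < b := fun b hb => hb.2.lt_of_ne (by rintro rfl; exact ha hb.1)
  rw [← type_inter_Iio_add_type_inter_Ici _ a, hlow, hhigh,
    type_union_of_forall_lt_s18 (by rintro _ rfl; exact hgt), type_singleton,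
    ← type_inter_Iio_add_type_inter_Ici S a, add_assoc]
  exact add_le_add le_rfl (one_add_le_add_one _)

theorem type_inter_Iio_add_one_le {S : Set α} {a : α} (ha : a ∈ S) :
    typeLT ↥(S ∩ Iio a) + 1 ≤ typeLT S := by
  rw [← type_singleton a, ← type_union_of_forall_lt_s18 fun b hb c hc => hc ▸ hb.2]
  exact type_mono (union_subset inter_subset_left (singleton_subset_iff.2 ha))

theorem type_preimage_le_of_strictMono {f : α → α} (hf : StrictMono f) (S : Set α) :
    typeLT ↥(f ⁻¹' S) ≤ typeLT S :=
  type_le_iff'.2 ⟨(OrderEmbedding.ofStrictMono (fun x : f ⁻¹' S => (⟨f x, x.2⟩ : S))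
    fun _ _ h => hf h).ltEmbedding⟩

end LinearOrder

theorem type_Ico_add (a b : Ordinal.{u}) : typeLT (Ico a (a + b)) = lift.{u + 1} b := by
  have h := type_union_of_forall_lt_s18 (S := Iio a) (T := Ico a (a + b))
    fun x hx y hy => hx.trans_le hy.1
  rwa [Iio_union_Ico_eq_Iio le_self_add, type_lt_Iio, type_lt_Iio, lift_add,
    add_left_cancel_iff, eq_comm] at h

theorem lift_otype_of_subset_Iio {S : Set Ordinal.{u}} {a : Ordinal.{u}} (hS : S ⊆ Iio a) :
    lift.{u + 1} (otype.{u, u} S) = typeLT S := by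
  obtain ⟨o, ho⟩ := mem_range_lift_of_le ((type_mono hS).trans_eq (type_lt_Iio a))
  have hiso : ∀ o', Nonempty (S ≃o Iio o') ↔ o' = o := fun o' => by
    have : o' = o ↔ typeLT S = typeLT (Iio o') := by rw [type_lt_Iio, ← ho, lift_inj, eq_comm]
    rw [this, type_eq]
    exact ⟨fun ⟨e⟩ => ⟨e.toRelIsoLT⟩, fun ⟨e⟩ => ⟨OrderIso.ofRelIsoLT e⟩⟩
  simp only [otype, hiso, ofPred_eq_eq_singleton, csInf_singleton, ho]

theorem exists_isSuccLimit_add_natCast {o : Ordinal} (ho : ω ≤ o) :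
    ∃ l, ∃ n : ℕ, Order.IsSuccLimit l ∧ o = l + n := by
  obtain ⟨n, hn⟩ := lt_omega0.1 (mod_lt o omega0_ne_zero)
  exact ⟨ω * (o / ω), n, isSuccLimit_mul_left isSuccLimit_omega0 ((div_pos omega0_ne_zero).2 ho),
    by rw [← hn, div_add_mod]⟩

theorem type_insert_lt_of_lt_isSuccLimit {l : Ordinal.{u}} (hl : Order.IsSuccLimit l) {n : ℕ}
    {S : Set Ordinal.{u}} (hS : S ⊆ Iio (l + n)) (hSt : typeLT S < lift.{u + 1} (l + n))
    {δ : Ordinal.{u}} (hδ : δ < l) : typeLT ↥(insert δ S) < lift.{u + 1} (l + n) := by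
  have hlow : insert δ S ∩ Iio l = insert δ (S ∩ Iio l) := insert_inter_of_mem (mem_Iio.2 hδ)
  have hhigh : insert δ S ∩ Ici l = S ∩ Ici l := insert_inter_of_notMem (notMem_Ici.2 hδ)
  have hLl : typeLT ↥(insert δ (S ∩ Iio l)) ≤ lift.{u + 1} l := by
    rw [← type_lt_Iio]
    exact type_mono (insert_subset hδ inter_subset_right)
  rw [← type_inter_Iio_add_type_inter_Ici _ l, hlow, hhigh]
  rw [← type_inter_Iio_add_type_inter_Ici _ l] at hSt
  rw [lift_add, lift_natCast] at hSt ⊢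
  -- Either `S ∩ Iio l` has type `< l`, which survives adding `δ` and the finite rest of `S`,
  -- or it has type `l`, and then the part of `S` above `l` has type `< n`.
  rcases (type_mono (s := S ∩ Iio l) inter_subset_right).trans_eq (type_lt_Iio l) |>.lt_or_eq
    with hL | hL
  · have hU : typeLT ↥(S ∩ Ici l) ≤ n := by
      rw [← lift_natCast.{u + 1, u}, ← type_Ico_add]
      exact type_mono fun x hx => ⟨hx.2, hS hx.1⟩
    obtain ⟨m, hm⟩ := lt_omega0.1 (hU.trans_lt (natCast_lt_omega0 n))
    have hll : Order.IsSuccLimit (lift.{u + 1} l) := isSuccLimit_lift.2 hl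
    rw [hm]
    calc typeLT ↥(insert δ (S ∩ Iio l)) + m
        < lift.{u + 1} l :=
          hll.add_natCast_lt ((type_insert_le _ _).trans_lt (hll.add_one_lt hL)) m
      _ ≤ lift.{u + 1} l + n := le_self_add
  · rw [hL] at hSt
    exact (add_le_add_left hLl _).trans_lt hSt

end Ordinal

section OrdCompact

variable {X : Type*} {τ : Set (Set X)}

theorem ordCompact_iff_type {β α : Ordinal.{u}} :
    OrdCompact β α X τ ↔ ∀ O : Ordinal → Set X, (∀ δ < α, O δ ∈ τ) →
      (∀ x, ∃ δ < α, x ∈ O δ) →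
      ∃ H ⊆ Iio α, typeLT H < Ordinal.lift.{u + 1} β ∧ ∀ x, ∃ δ ∈ H, x ∈ O δ := by
  simp only [OrdCompact, iUnion₂_eq_univ_iff, mem_Iio, exists_prop]
  refine forall_congr' fun O => imp_congr_right fun _ => imp_congr_right fun _ =>
    exists_congr fun H => and_congr_right fun hH => and_congr_left fun _ => ?_
  rw [← lift_otype_of_subset_Iio hH, Ordinal.lift_lt]

theorem OrdCompact.add_one {α : Ordinal.{u}} (hα : ω ≤ α) (h : OrdCompact α α X τ) :
    OrdCompact (α + 1) (α + 1) X τ := by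
  rw [ordCompact_iff_type] at h ⊢
  intro W hW hWcov
  have hα1 : α < α + 1 := lt_add_one α
  set O : Ordinal → Set X := fun ε => if ε = 0 then W α else W (ε - 1)
  have hO : ∀ δ < α, O δ ∈ τ := by
    intro δ hδ
    by_cases hδ0 : δ = 0
    · simpa [O, hδ0] using hW α hα1
    · simpa [O, hδ0] using hW (δ - 1) ((sub_le_self δ 1).trans_lt (hδ.trans hα1))
  have hOcov : ∀ x, ∃ δ < α, x ∈ O δ := by
    intro x
    obtain ⟨δ, hδ, hx⟩ := hWcov x
    rcases (Order.lt_add_one_iff.1 hδ).lt_or_eq with hδ | rfl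
    · refine ⟨1 + δ, ?_, by simpa [O] using hx⟩
      simpa [one_add_of_omega0_le hα] using (add_lt_add_iff_left 1).2 hδ
    · exact ⟨0, omega0_pos.trans_le hα, by simpa [O] using hx⟩
  obtain ⟨H, hH, hHt, hHcov⟩ := h O hO hOcov
  refine ⟨insert α ((1 + ·) ⁻¹' H), ?_, ?_, ?_⟩
  · rintro δ (rfl | hδ)
    · exact hα1
    · exact le_add_self.trans_lt ((hH hδ).trans hα1)
  · calc typeLT ↥(insert α ((1 + ·) ⁻¹' H))
        ≤ typeLT ↥((1 + ·) ⁻¹' H) + 1 := type_insert_le _ _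
      _ ≤ typeLT H + 1 := add_le_add_left (type_preimage_le_of_strictMono add_right_strictMono H) 1
      _ < Ordinal.lift.{u + 1} (α + 1) := by simpa using hHt
  · intro x
    obtain ⟨ε, hε, hx⟩ := hHcov x
    by_cases hε0 : ε = 0
    · exact ⟨α, mem_insert α _, by simpa [O, hε0] using hx⟩
    · refine ⟨ε - 1, Or.inr ?_, by simpa [O, hε0] using hx⟩
      simpa [Ordinal.add_sub_cancel_of_le (Order.one_le_iff_ne_zero.2 hε0)] using hε

theorem exists_subcover_Ico {O : Ordinal → Set X} {l : Ordinal.{u}} (hl : Order.IsSuccLimit l)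
    (n : ℕ) (hOcov : ∀ x, ∃ δ < l + n, x ∈ O δ) (hlow : ∀ δ < l, O δ = ∅) :
    ∃ H ⊆ Iio (l + n), typeLT H < Ordinal.lift.{u + 1} (l + n) ∧ ∀ x, ∃ δ ∈ H, x ∈ O δ := by
  refine ⟨Ico l (l + n), Ico_subset_Iio_self, ?_, fun x => ?_⟩
  · rw [type_Ico_add, Ordinal.lift_lt]
    exact (natCast_lt_of_isSuccLimit hl n).trans_le le_self_add
  · obtain ⟨δ, hδ, hx⟩ := hOcov x
    refine ⟨δ, ⟨not_lt.1 fun hδl => ?_, hδ⟩, hx⟩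
    simp [hlow δ hδl] at hx

theorem OrdCompact.of_add_one (hT1 : IsT1Fam τ) {α : Ordinal.{u}} (hα : ω ≤ α)
    (h : OrdCompact (α + 1) (α + 1) X τ) : OrdCompact α α X τ := by
  obtain ⟨l, n, hl, rfl⟩ := exists_isSuccLimit_add_natCast hα
  rw [ordCompact_iff_type] at h ⊢
  intro O hO hOcov
  by_cases hlow : ∃ δ₀ < l, (O δ₀).Nonempty
  · obtain ⟨δ₀, hδ₀, y, hy⟩ := hlow
    set V : Ordinal → Set X := fun δ => if δ < l + n then O δ \ {y} else O δ₀
    have hV : ∀ δ < l + n + 1, V δ ∈ τ := by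
      intro δ _
      by_cases hδ : δ < l + n
      · by_cases hyδ : y ∈ O δ
        · simpa [V, hδ] using hT1 _ (hO δ hδ) y hyδ
        · simpa [V, hδ, sdiff_singleton_eq_self hyδ] using hO δ hδ
      · simpa [V, hδ] using hO δ₀ (hδ₀.trans_le le_self_add)
    have hVcov : ∀ x, ∃ δ < l + n + 1, x ∈ V δ := by
      intro x
      by_cases hxy : x = y
      · exact ⟨l + n, lt_add_one _, by simpa [V, hxy] using hy⟩
      · obtain ⟨δ, hδ, hx⟩ := hOcov x
        exact ⟨δ, hδ.trans (lt_add_one _), by simpa [V, hδ, hxy] using hx⟩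
    obtain ⟨H, hH, hHt, hHcov⟩ := h V hV hVcov
    have htop : l + n ∈ H := by
      obtain ⟨δ, hδ, hyδ⟩ := hHcov y
      have hδ' : ¬δ < l + n := fun h' => by simp [V, h'] at hyδ
      rwa [(Order.lt_add_one_iff.1 (hH hδ)).antisymm (not_lt.1 hδ')] at hδ
    have hHt' : typeLT ↥(H ∩ Iio (l + n)) < Ordinal.lift.{u + 1} (l + n) := by
      rw [Ordinal.lift_add_one, Order.lt_add_one_iff] at hHt
      exact Order.add_one_le_iff.1 ((type_inter_Iio_add_one_le htop).trans hHt)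
    refine ⟨insert δ₀ (H ∩ Iio (l + n)), insert_subset (hδ₀.trans_le le_self_add)
      inter_subset_right, type_insert_lt_of_lt_isSuccLimit hl inter_subset_right hHt' hδ₀, ?_⟩
    intro x
    by_cases hxy : x = y
    · exact ⟨δ₀, mem_insert _ _, hxy ▸ hy⟩
    obtain ⟨δ, hδ, hx⟩ := hHcov x
    by_cases hδα : δ < l + n
    · exact ⟨δ, Or.inr ⟨hδ, hδα⟩, by
        simp only [V, if_pos hδα] at hx
        exact hx.1⟩
    · exact ⟨δ₀, mem_insert _ _, by simpa [V, hδα] using hx⟩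
  · push Not at hlow
    exact exists_subcover_Ico hl n hOcov hlow

end OrdCompact

theorem ordCompact_succ_iff_of_t1_general {X : Type*}
    {τ : Set (Set X)} (hT1 : IsT1Fam τ)
    {α : Ordinal} (hα : ω ≤ α) :
    OrdCompact α α X τ ↔ OrdCompact (α + 1) (α + 1) X τ :=
  ⟨OrdCompact.add_one hα, OrdCompact.of_add_one hT1 hα⟩

/-- Proposition 6.4(1): for a `T₁` pair `(X, τ)` and an infinite ordinal `α`,
`[α, α]`-compactness is equivalent to `[α + 1, α + 1]`-compactness. -/
theorem ordCompact_succ_iff_of_t1 {X : Type*} (hX : Nonempty X)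
    {τ : Set (Set X)} (hτ : τ.Nonempty) (hT1 : IsT1Fam τ)
    {α : Ordinal} (hα : ω ≤ α) :
    OrdCompact α α X τ ↔ OrdCompact (α + 1) (α + 1) X τ :=
  ordCompact_succ_iff_of_t1_general hT1 hα
end
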